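/- Time Lipschitz Continuous Belief (Lemma 1): If the transition kernel T is L_T-time-Lipschitz, then for every Δ ∈ ℕ, every initial state s₀ ∈ S, and every action sequence a₀, …, a_{Δ-1} ∈ A, the function s' ↦ dist(s', s₀) is integrable with respect to the belief measure b and ∫ dist(s', s₀) db(s') ≤ Δ · L_T. (Since the L1-Wasserstein distance between a measure and a Dirac measure δ_{s₀} equals the expected distance to s₀, this says W₁(b, δ_{s₀}) ≤ Δ · L_T.) -/

import Mathlib

/-!
Each transition moves the state by at most `L_T` in expectation, so by the triangle inequality
`d(s', s₀) ≤ d(s', s) + d(s, s₀)` every composition with the kernel adds at most `L_T` to the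
expected distance from `s₀`. The estimate is carried out for `ℝ≥0∞`-valued integrals of `edist`,
which need no integrability, and converted to a Bochner integral at the end.
-/

open MeasureTheory ProbabilityTheory
open scoped ENNReal

/-- The belief measure obtained by iterated composition of the transition kernel:
`μ₀ = δ_{s₀}` and `μ_{i+1} = μ_i.bind (s ↦ T (s, aᵢ))`. -/
noncomputable def beliefMeasure {S A : Type*} [MeasurableSpace S] [MeasurableSpace A]
    (T : Kernel (S × A) S) (s₀ : S) :
    (Δ : ℕ) → (Fin Δ → A) → Measure S
  | 0, _ => Measure.dirac s₀
  | (Δ + 1), a =>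
      (beliefMeasure T s₀ Δ (fun i => a i.castSucc)).bind (fun s => T (s, a (Fin.last Δ)))

theorem MeasureTheory.integrable_and_integral_le_of_lintegral_ofReal_le {α : Type*}
    [MeasurableSpace α] {μ : Measure α} {f : α → ℝ} (hf : 0 ≤ᵐ[μ] f)
    (hfm : AEStronglyMeasurable f μ) {c : ℝ} (hc : 0 ≤ c)
    (h : ∫⁻ x, ENNReal.ofReal (f x) ∂μ ≤ ENNReal.ofReal c) :
    Integrable f μ ∧ ∫ x, f x ∂μ ≤ c := by
  have hint : Integrable f μ :=
    ⟨hfm, (hasFiniteIntegral_iff_ofReal hf).2 (h.trans_lt ENNReal.ofReal_lt_top)⟩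
  refine ⟨hint, ?_⟩
  rwa [← ENNReal.ofReal_le_ofReal_iff hc, ofReal_integral_eq_lintegral_ofReal hint hf]

theorem MeasureTheory.Measure.lintegral_edist_comp_le {α : Type*} [PseudoEMetricSpace α]
    [MeasurableSpace α] [OpensMeasurableSpace α] (κ : Kernel α α) [IsMarkovKernel κ]
    (μ : Measure α) [IsProbabilityMeasure μ] (x₀ : α) {c : ℝ≥0∞}
    (hκ : ∀ x, ∫⁻ y, edist y x ∂κ x ≤ c) :
    ∫⁻ y, edist y x₀ ∂(κ ∘ₘ μ) ≤ ∫⁻ x, edist x x₀ ∂μ + c := by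
  have step : ∀ x, ∫⁻ y, edist y x₀ ∂κ x ≤ edist x x₀ + c := fun x =>
    calc ∫⁻ y, edist y x₀ ∂κ x
        ≤ ∫⁻ y, (edist y x + edist x x₀) ∂κ x := lintegral_mono fun y => edist_triangle y x x₀
      _ = ∫⁻ y, edist y x ∂κ x + edist x x₀ := by
        rw [lintegral_add_right _ measurable_const, lintegral_const, measure_univ, mul_one]
      _ ≤ edist x x₀ + c := by rw [add_comm]; gcongr; exact hκ x
  calc ∫⁻ y, edist y x₀ ∂(κ ∘ₘ μ)
      = ∫⁻ x, ∫⁻ y, edist y x₀ ∂κ x ∂μ :=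
        Measure.lintegral_bind κ.aemeasurable measurable_edist_left.aemeasurable
    _ ≤ ∫⁻ x, (edist x x₀ + c) ∂μ := lintegral_mono step
    _ = ∫⁻ x, edist x x₀ ∂μ + c := by
        rw [lintegral_add_right _ measurable_const, lintegral_const, measure_univ, mul_one]

section beliefMeasure

variable {S A : Type*} [MeasurableSpace S] [MeasurableSpace A] (T : Kernel (S × A) S) (s₀ : S)

theorem beliefMeasure_succ (Δ : ℕ) (a : Fin (Δ + 1) → A) :
    beliefMeasure T s₀ (Δ + 1) a =
      T.sectL (a (Fin.last Δ)) ∘ₘ beliefMeasure T s₀ Δ (fun i => a i.castSucc) :=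
  rfl

instance isProbabilityMeasure_beliefMeasure [IsMarkovKernel T] :
    ∀ (Δ : ℕ) (a : Fin Δ → A), IsProbabilityMeasure (beliefMeasure T s₀ Δ a)
  | 0, _ => Measure.dirac.isProbabilityMeasure
  | Δ + 1, a => by
    have := isProbabilityMeasure_beliefMeasure Δ (fun i => a i.castSucc)
    rw [beliefMeasure_succ]
    infer_instance

theorem lintegral_edist_beliefMeasure_le [PseudoEMetricSpace S] [OpensMeasurableSpace S]
    [IsMarkovKernel T] {c : ℝ≥0∞} (hT : ∀ s a, ∫⁻ s', edist s' s ∂T (s, a) ≤ c) :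
    ∀ (Δ : ℕ) (a : Fin Δ → A), ∫⁻ s', edist s' s₀ ∂beliefMeasure T s₀ Δ a ≤ Δ * c
  | 0, _ => by simp [beliefMeasure, lintegral_dirac' _ measurable_edist_left]
  | Δ + 1, a => by
    rw [beliefMeasure_succ, Nat.cast_succ, add_one_mul]
    exact (Measure.lintegral_edist_comp_le _ _ s₀ fun s => hT s _).trans
      (by gcongr; exact lintegral_edist_beliefMeasure_le hT Δ _)

end beliefMeasure

theorem belief_time_lipschitz_general
    {S A : Type*} [MetricSpace S] [MeasurableSpace S] [BorelSpace S]
    [MeasurableSpace A]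
    (T : Kernel (S × A) S) [IsMarkovKernel T]
    (L_T : ℝ) (hL : 0 ≤ L_T)
    (hT : ∀ (s : S) (a : A),
      Integrable (fun s' => dist s' s) (T (s, a)) ∧
      ∫ s', dist s' s ∂(T (s, a)) ≤ L_T)
    (Δ : ℕ) (s₀ : S) (a : Fin Δ → A) :
    Integrable (fun s' => dist s' s₀) (beliefMeasure T s₀ Δ a) ∧
      ∫ s', dist s' s₀ ∂(beliefMeasure T s₀ Δ a) ≤ (Δ : ℝ) * L_T := by
  have hT_edist : ∀ s a, ∫⁻ s', edist s' s ∂T (s, a) ≤ ENNReal.ofReal L_T := fun s a => by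
    simp_rw [edist_dist]
    rw [← ofReal_integral_eq_lintegral_ofReal (hT s a).1 (.of_forall fun _ => dist_nonneg)]
    exact ENNReal.ofReal_le_ofReal (hT s a).2
  refine integrable_and_integral_le_of_lintegral_ofReal_le (.of_forall fun _ => dist_nonneg)
    (by fun_prop) (by positivity) ?_
  rw [ENNReal.ofReal_mul (Nat.cast_nonneg Δ), ENNReal.ofReal_natCast]
  simpa only [edist_dist] using lintegral_edist_beliefMeasure_le T s₀ hT_edist Δ a

/-- **Time Lipschitz Continuous Belief (Lemma 1).**
If the transition kernel `T` is `L_T`-time-Lipschitz, then for every `Δ ∈ ℕ`, every initial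
state `s₀` and every action sequence `a₀, …, a_{Δ-1}`, the function `s' ↦ dist s' s₀` is
integrable with respect to the belief measure `b` and `∫ dist s' s₀ ∂b ≤ Δ * L_T`. -/
theorem belief_time_lipschitz
    {S A : Type*} [MetricSpace S] [MeasurableSpace S] [BorelSpace S]
    [MetricSpace A] [MeasurableSpace A] [BorelSpace A]
    (T : Kernel (S × A) S) [IsMarkovKernel T]
    (L_T : ℝ) (hL : 0 ≤ L_T)
    (hT : ∀ (s : S) (a : A),
      Integrable (fun s' => dist s' s) (T (s, a)) ∧
      ∫ s', dist s' s ∂(T (s, a)) ≤ L_T)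
    (Δ : ℕ) (s₀ : S) (a : Fin Δ → A) :
    Integrable (fun s' => dist s' s₀) (beliefMeasure T s₀ Δ a) ∧
      ∫ s', dist s' s₀ ∂(beliefMeasure T s₀ Δ a) ≤ (Δ : ℝ) * L_T :=
  belief_time_lipschitz_general T L_T hL hT Δ s₀ a
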